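/- arXiv:2207.09677 — 6 statements merged into one kernel-verified Lean document; each statement's English description precedes it below -/
import Mathlib

section
/- Let F : ℝ^N → ℝ^N satisfy ‖F(x₁) - F(x₂)‖ ≤ L‖x₁ - x₂‖ for all x₁, x₂ ∈ B_r. Fix k and r > 0, and define X(x, v₁, ..., v_k) = (I - 2∑_{j=1}^k v_j v_jᵀ) F(x). Then there exists a constant Q₀ = √(k+1) · max{(1 + 2 k r²) L, 4 r (‖F(0)‖ + L r)} such that for all tuples (x, v₁, ..., v_k), (x̄, v̄₁, ..., v̄_k) with ‖x‖² + ∑_i ‖v_i‖² ≤ r² and ‖x̄‖² + ∑_i ‖v̄_i‖² ≤ r², one has ‖X(x, v₁, ..., v_k) - X(x̄, v̄₁, ..., v̄_k)‖ ≤ Q₀ · (‖x - x̄‖² + ∑_{i=1}^k ‖v_i - v̄_i‖²)^{1/2}. -/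
set_option maxHeartbeats 1000000

open scoped BigOperators RealInnerProductSpace

/-- Lipschitz estimate for `X(x, v₁,...,v_k) = (I - 2∑ v_j v_jᵀ) F(x)` on the
ball `‖x‖² + ∑‖v_i‖² ≤ r²`, with the explicit constant
`Q₀ = √(k+1) · max{(1 + 2kr²)L, 4r(‖F(0)‖ + Lr)}`. -/
theorem stmt4 {N k : ℕ} (F : EuclideanSpace ℝ (Fin N) → EuclideanSpace ℝ (Fin N))
    (L r : ℝ) (hr : 0 < r) (hL : 0 ≤ L)
    (hF : ∀ x y : EuclideanSpace ℝ (Fin N), ‖x‖ ≤ r → ‖y‖ ≤ r → ‖F x - F y‖ ≤ L * ‖x - y‖)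
    (x x' : EuclideanSpace ℝ (Fin N)) (v v' : Fin k → EuclideanSpace ℝ (Fin N))
    (hb : ‖x‖ ^ 2 + ∑ i, ‖v i‖ ^ 2 ≤ r ^ 2)
    (hb' : ‖x'‖ ^ 2 + ∑ i, ‖v' i‖ ^ 2 ≤ r ^ 2) :
    ‖(F x - (2:ℝ) • ∑ j, ⟪v j, F x⟫ • v j) - (F x' - (2:ℝ) • ∑ j, ⟪v' j, F x'⟫ • v' j)‖
      ≤ (Real.sqrt (k + 1) * max ((1 + 2 * k * r ^ 2) * L) (4 * r * (‖F 0‖ + L * r))) *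
        Real.sqrt (‖x - x'‖ ^ 2 + ∑ i, ‖v i - v' i‖ ^ 2) := by
  set a := ‖x - x'‖ with ha
  set b : Fin k → ℝ := fun j => ‖v j - v' j‖ with hbdef
  have hx20 : (0:ℝ) ≤ ‖x‖ ^ 2 := sq_nonneg _
  have hx20' : (0:ℝ) ≤ ‖x'‖ ^ 2 := sq_nonneg _
  have hsv0 : (0:ℝ) ≤ ∑ i, ‖v i‖ ^ 2 := Finset.sum_nonneg fun i _ => sq_nonneg _
  have hsv0' : (0:ℝ) ≤ ∑ i, ‖v' i‖ ^ 2 := Finset.sum_nonneg fun i _ => sq_nonneg _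
  have hsv : ∑ i, ‖v i‖ ^ 2 ≤ r ^ 2 := by linarith
  have hx : ‖x‖ ≤ r := by nlinarith [norm_nonneg x]
  have hx' : ‖x'‖ ≤ r := by nlinarith [norm_nonneg x']
  have hvj : ∀ j, ‖v j‖ ≤ r := by
    intro j
    have h1 : ‖v j‖ ^ 2 ≤ ∑ i, ‖v i‖ ^ 2 :=
      Finset.single_le_sum (f := fun i => ‖v i‖ ^ 2) (fun i _ => sq_nonneg _) (Finset.mem_univ j)
    nlinarith [norm_nonneg (v j)]
  have hv'j : ∀ j, ‖v' j‖ ≤ r := by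
    intro j
    have h1 : ‖v' j‖ ^ 2 ≤ ∑ i, ‖v' i‖ ^ 2 :=
      Finset.single_le_sum (f := fun i => ‖v' i‖ ^ 2) (fun i _ => sq_nonneg _) (Finset.mem_univ j)
    nlinarith [norm_nonneg (v' j)]
  set C : ℝ := ‖F 0‖ + L * r with hC
  have hC0 : 0 ≤ C := by positivity
  have hFx' : ‖F x'‖ ≤ C := by
    have h0 : ‖F x' - F 0‖ ≤ L * ‖x' - 0‖ := hF x' 0 hx' (by simp [hr.le])
    calc ‖F x'‖ = ‖(F x' - F 0) + F 0‖ := by rw [sub_add_cancel]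
      _ ≤ ‖F x' - F 0‖ + ‖F 0‖ := norm_add_le _ _
      _ ≤ L * ‖x'‖ + ‖F 0‖ := by rw [sub_zero] at h0; linarith
      _ ≤ C := by rw [hC]; nlinarith
  have hFd : ‖F x - F x'‖ ≤ L * a := hF x x' hx hx'
  -- the per-j decomposition
  have key : ∀ j, ⟪v j, F x⟫ • v j - ⟪v' j, F x'⟫ • v' j
      = ⟪v j, F x - F x'⟫ • v j + ⟪v j - v' j, F x'⟫ • v j + ⟪v' j, F x'⟫ • (v j - v' j) := by
    intro j
    simp only [inner_sub_left, inner_sub_right, sub_smul, smul_sub]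
    abel
  have keybound : ∀ j, ‖⟪v j, F x⟫ • v j - ⟪v' j, F x'⟫ • v' j‖
      ≤ ‖v j‖ ^ 2 * (L * a) + 2 * r * C * b j := by
    intro j
    rw [key j]
    have h1 : ‖⟪v j, F x - F x'⟫ • v j‖ ≤ ‖v j‖ ^ 2 * (L * a) := by
      rw [norm_smul, Real.norm_eq_abs]
      have := abs_real_inner_le_norm (v j) (F x - F x')
      have hn := norm_nonneg (v j)
      nlinarith [abs_nonneg ⟪v j, F x - F x'⟫, mul_le_mul_of_nonneg_right this hn,
        mul_le_mul_of_nonneg_left hFd hn]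
    have h2 : ‖⟪v j - v' j, F x'⟫ • v j‖ ≤ r * C * b j := by
      have hbj : b j = ‖v j - v' j‖ := rfl
      rw [norm_smul, Real.norm_eq_abs, hbj]
      have h := abs_real_inner_le_norm (v j - v' j) (F x')
      have hn := norm_nonneg (v j - v' j)
      have hnj := hvj j
      have hn0 := norm_nonneg (v j)
      nlinarith [mul_le_mul_of_nonneg_right h hn0,
        mul_le_mul_of_nonneg_left (mul_le_mul hFx' hnj hn0 hC0) hn]
    have h3 : ‖⟪v' j, F x'⟫ • (v j - v' j)‖ ≤ r * C * b j := by
      have hbj : b j = ‖v j - v' j‖ := rfl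
      rw [norm_smul, Real.norm_eq_abs, hbj]
      have h := abs_real_inner_le_norm (v' j) (F x')
      have hn := norm_nonneg (v j - v' j)
      have hnj := hv'j j
      nlinarith [mul_le_mul_of_nonneg_right h hn,
        mul_le_mul_of_nonneg_right (mul_le_mul hnj hFx' (norm_nonneg _) hr.le) hn]
    calc ‖⟪v j, F x - F x'⟫ • v j + ⟪v j - v' j, F x'⟫ • v j + ⟪v' j, F x'⟫ • (v j - v' j)‖
        ≤ ‖⟪v j, F x - F x'⟫ • v j + ⟪v j - v' j, F x'⟫ • v j‖ + ‖⟪v' j, F x'⟫ • (v j - v' j)‖ :=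
          norm_add_le _ _
      _ ≤ ‖⟪v j, F x - F x'⟫ • v j‖ + ‖⟪v j - v' j, F x'⟫ • v j‖ + ‖⟪v' j, F x'⟫ • (v j - v' j)‖ := by
          have := norm_add_le (⟪v j, F x - F x'⟫ • v j) (⟪v j - v' j, F x'⟫ • v j)
          linarith
      _ ≤ ‖v j‖ ^ 2 * (L * a) + 2 * r * C * b j := by linarith
  set B : ℝ := ∑ j, b j with hB
  have hB0 : 0 ≤ B := Finset.sum_nonneg fun j _ => norm_nonneg _
  have ha0 : 0 ≤ a := norm_nonneg _
  -- main additive bound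
  have hsumbound : ‖∑ j, ⟪v j, F x⟫ • v j - ∑ j, ⟪v' j, F x'⟫ • v' j‖
      ≤ (∑ j, ‖v j‖ ^ 2) * (L * a) + 2 * r * C * B := by
    rw [← Finset.sum_sub_distrib]
    calc ‖∑ j, (⟪v j, F x⟫ • v j - ⟪v' j, F x'⟫ • v' j)‖
        ≤ ∑ j, ‖⟪v j, F x⟫ • v j - ⟪v' j, F x'⟫ • v' j‖ := norm_sum_le _ _
      _ ≤ ∑ j, (‖v j‖ ^ 2 * (L * a) + 2 * r * C * b j) :=
          Finset.sum_le_sum fun j _ => keybound j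
      _ = (∑ j, ‖v j‖ ^ 2) * (L * a) + 2 * r * C * B := by
          rw [Finset.sum_add_distrib, ← Finset.sum_mul, ← Finset.mul_sum]
  have hmain : ‖(F x - (2:ℝ) • ∑ j, ⟪v j, F x⟫ • v j) - (F x' - (2:ℝ) • ∑ j, ⟪v' j, F x'⟫ • v' j)‖
      ≤ (1 + 2 * ∑ j, ‖v j‖ ^ 2) * L * a + 4 * r * C * B := by
    have heq : (F x - (2:ℝ) • ∑ j, ⟪v j, F x⟫ • v j) - (F x' - (2:ℝ) • ∑ j, ⟪v' j, F x'⟫ • v' j)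
        = (F x - F x') + (-(2:ℝ)) • (∑ j, ⟪v j, F x⟫ • v j - ∑ j, ⟪v' j, F x'⟫ • v' j) := by
      simp only [neg_smul, smul_sub]; abel
    rw [heq]
    calc ‖(F x - F x') + (-(2:ℝ)) • (∑ j, ⟪v j, F x⟫ • v j - ∑ j, ⟪v' j, F x'⟫ • v' j)‖
        ≤ ‖F x - F x'‖ + ‖(-(2:ℝ)) • (∑ j, ⟪v j, F x⟫ • v j - ∑ j, ⟪v' j, F x'⟫ • v' j)‖ :=
          norm_add_le _ _
      _ = ‖F x - F x'‖ + 2 * ‖∑ j, ⟪v j, F x⟫ • v j - ∑ j, ⟪v' j, F x'⟫ • v' j‖ := by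
          rw [norm_smul]; norm_num
      _ ≤ L * a + 2 * ((∑ j, ‖v j‖ ^ 2) * (L * a) + 2 * r * C * B) := by
          have := hsumbound; nlinarith
      _ = (1 + 2 * ∑ j, ‖v j‖ ^ 2) * L * a + 4 * r * C * B := by ring
  -- replace ∑ ‖v j‖² by k r²
  have hkr : ∑ j, ‖v j‖ ^ 2 ≤ k * r ^ 2 := by
    rcases Nat.eq_zero_or_pos k with hk | hk
    · subst hk; simp
    · calc ∑ j, ‖v j‖ ^ 2 ≤ r ^ 2 := hsv
        _ ≤ k * r ^ 2 := by
            have hk1 : (1:ℝ) ≤ k := by exact_mod_cast hk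
            nlinarith [sq_nonneg r]
  set M : ℝ := max ((1 + 2 * k * r ^ 2) * L) (4 * r * (‖F 0‖ + L * r)) with hM
  have hM0 : 0 ≤ M := le_trans (by positivity) (le_max_left _ _)
  have hmain2 : ‖(F x - (2:ℝ) • ∑ j, ⟪v j, F x⟫ • v j) - (F x' - (2:ℝ) • ∑ j, ⟪v' j, F x'⟫ • v' j)‖
      ≤ M * (a + B) := by
    have h1 : (1 + 2 * ∑ j, ‖v j‖ ^ 2) * L * a ≤ M * a := by
      have : (1 + 2 * ∑ j, ‖v j‖ ^ 2) * L ≤ M := by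
        refine le_trans ?_ (le_max_left _ _)
        nlinarith
      nlinarith
    have h2 : 4 * r * C * B ≤ M * B := by
      have : 4 * r * C ≤ M := le_max_right _ _
      nlinarith
    calc _ ≤ (1 + 2 * ∑ j, ‖v j‖ ^ 2) * L * a + 4 * r * C * B := hmain
      _ ≤ M * a + M * B := add_le_add h1 h2
      _ = M * (a + B) := by ring
  -- Cauchy-Schwarz: a + B ≤ √(k+1) √(a² + ∑ b²)
  have hcs : a + B ≤ Real.sqrt (k + 1) * Real.sqrt (a ^ 2 + ∑ i, b i ^ 2) := by
    set c : Fin (k + 1) → ℝ := Fin.cons a b with hc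
    have hsum : ∑ i, c i = a + B := by rw [hc, Fin.sum_cons]
    have hsumsq : ∑ i, c i ^ 2 = a ^ 2 + ∑ i, b i ^ 2 := by
      have hpt : ∀ i : Fin (k + 1), c i ^ 2 = Fin.cons (α := fun _ => ℝ) (a ^ 2) (fun j => b j ^ 2) i := by
        intro i
        refine Fin.cases ?_ ?_ i <;> simp [hc]
      rw [Finset.sum_congr rfl fun i _ => hpt i, Fin.sum_cons]
    have hcs0 := sq_sum_le_card_mul_sum_sq (s := (Finset.univ : Finset (Fin (k + 1)))) (f := c)
    rw [hsum, hsumsq, Finset.card_univ, Fintype.card_fin] at hcs0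
    have hnn : 0 ≤ a ^ 2 + ∑ i, b i ^ 2 :=
      add_nonneg (sq_nonneg a) (Finset.sum_nonneg fun i _ => sq_nonneg _)
    have h2 : (a + B) ^ 2 ≤ ((k : ℝ) + 1) * (a ^ 2 + ∑ i, b i ^ 2) := by
      push_cast at hcs0; linarith
    have h3 : a + B ≤ Real.sqrt (((k : ℝ) + 1) * (a ^ 2 + ∑ i, b i ^ 2)) := by
      rw [show a + B = Real.sqrt ((a + B) ^ 2) from (Real.sqrt_sq (by linarith)).symm]
      exact Real.sqrt_le_sqrt h2
    rw [Real.sqrt_mul (by positivity : (0:ℝ) ≤ (k : ℝ) + 1)] at h3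
    exact h3
  calc _ ≤ M * (a + B) := hmain2
    _ ≤ M * (Real.sqrt (k + 1) * Real.sqrt (a ^ 2 + ∑ i, b i ^ 2)) :=
        mul_le_mul_of_nonneg_left hcs hM0
    _ = (Real.sqrt (k + 1) * M) * Real.sqrt (‖x - x'‖ ^ 2 + ∑ i, ‖v i - v' i‖ ^ 2) := by
        rw [ha, hbdef]; ring
end

section
/- Let x : [0,T] → ℝ^N and v_i : [0,T] → ℝ^N (1 ≤ i ≤ k) be C¹ solutions of the modified shrinking-dimer saddle dynamics dx/dt = β X̃(x, v₁,...,v_k), dv_i/dt = γ Ṽ_i(x, v₁,...,v_k, l), dl/dt = -l, where X̃ and Ṽ_i are globally Lipschitz with constants Q₀ and Q₂ (the latter up to an additive Q₂ l₀² term), and with initial data satisfying ‖x₀‖² + ∑_i ‖v_{i,0}‖² ≤ r₀². Then there is an increasing function S(β, γ) with S(0,0) = (‖x₀‖² + ∑‖v_{i,0}‖²)^{1/2} such that (‖x(t)‖² + ∑_{i=1}^k ‖v_i(t)‖²)^{1/2} ≤ S(β, γ) for all t ∈ [0,T]; in particular, for β, γ small enough, the solution stays in the ball of radius (‖x₀‖²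 + ∑‖v_{i,0}‖²)^{1/2} + ε₀. -/
/-!
The hypotheses bound differences of `X̃` and `Ṽ` only, never their size. So every solution is
compared with one fixed reference solution `(x_s, v_s)` with `γ_s > 0`: for parameters `(β, γ)`
put `σ = γ / γ_s` and `e = (x - x₀, (v - v₀) - σ (v_s - v₀))`. Then
`e' = (β X̃(z), γ (Ṽ(z, l) - Ṽ(z_s, l)))`, so the Lipschitz bounds give `‖e'‖ ≤ K ‖e‖ + ε` with
`K, ε = O(β + γ)`, and Grönwall gives `‖e‖ ≤ ε T exp (K T)`. Hence
`‖z - z₀‖ ≤ ε T exp (K T) + σ sup ‖z_s - z₀‖`, an explicit bound that is monotone and continuous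
in `(β, γ)` and vanishes at `(0, 0)`.
-/

open Set Real WithLp

lemma gronwallBound_zero_le {K ε t : ℝ} (hK : 0 ≤ K) (hε : 0 ≤ ε) :
    gronwallBound 0 K ε t ≤ ε * t * exp (K * t) := by
  rcases hK.eq_or_lt with rfl | hK
  · simp [gronwallBound_K0]
  have hexp : exp (K * t) - 1 ≤ K * t * exp (K * t) := by
    nlinarith [add_one_le_exp (-(K * t)), exp_neg (K * t), mul_inv_cancel₀ (exp_pos (K * t)).ne',
      exp_pos (K * t)]
  calc gronwallBound 0 K ε t = ε / K * (exp (K * t) - 1) := by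
        simp [gronwallBound_of_K_ne_0 hK.ne']
    _ ≤ ε / K * (K * t * exp (K * t)) := by gcongr
    _ = ε * t * exp (K * t) := by field_simp

lemma norm_le_mul_exp_of_norm_deriv_le {E : Type*} [NormedAddCommGroup E] [NormedSpace ℝ E]
    {f f' : ℝ → E} {K ε T : ℝ} (hK : 0 ≤ K) (hε : 0 ≤ ε)
    (hf : ∀ t ∈ Icc 0 T, HasDerivAt f (f' t) t) (hf0 : f 0 = 0)
    (bound : ∀ t ∈ Icc 0 T, ‖f' t‖ ≤ K * ‖f t‖ + ε) :
    ∀ t ∈ Icc 0 T, ‖f t‖ ≤ ε * T * exp (K * T) := by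
  intro t ht
  have h := norm_le_gronwallBound_of_norm_deriv_right_le
    (fun s hs => (hf s hs).continuousAt.continuousWithinAt)
    (fun s hs => (hf s (Ico_subset_Icc_self hs)).hasDerivWithinAt)
    (by rw [hf0, norm_zero]) (fun s hs => bound s (Ico_subset_Icc_self hs)) t ht
  rw [sub_zero] at h
  obtain ⟨ht0, htT⟩ := ht
  have hT : 0 ≤ T := ht0.trans htT
  refine h.trans ((gronwallBound_zero_le hK hε).trans ?_)
  gcongr

lemma eq_mul_exp_neg_of_hasDerivAt {l : ℝ → ℝ} {T : ℝ}
    (hl : ∀ t ∈ Icc 0 T, HasDerivAt l (-l t) t) : ∀ t ∈ Icc 0 T, l t = l 0 * exp (-t) := by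
  have hconst := constant_of_has_deriv_right_zero (f := fun t => l t * exp t)
    (fun t ht => ((hl t ht).continuousAt.mul continuous_exp.continuousAt).continuousWithinAt)
    (fun t ht => by
      have h := ((hl t (Ico_subset_Icc_self ht)).mul (hasDerivAt_exp t)).hasDerivWithinAt
        (s := Ici t)
      rwa [neg_mul, neg_add_cancel] at h)
  intro t ht
  rw [exp_zero, mul_one] at hconst
  rw [← hconst t ht, mul_assoc, ← exp_add, add_neg_cancel, exp_zero, mul_one]

lemma exists_pos_forall_le_add_of_continuousAt {f : ℝ → ℝ → ℝ}
    (hf : ContinuousAt (Function.uncurry f) (0, 0)) {ε : ℝ} (hε : 0 < ε) :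
    ∃ δ > 0, ∀ β γ, 0 ≤ β → β ≤ δ → 0 ≤ γ → γ ≤ δ → f β γ ≤ f 0 0 + ε := by
  obtain ⟨δ, hδ, hf⟩ := Metric.continuousAt_iff.1 hf ε hε
  refine ⟨δ / 2, by positivity, fun β γ hβ hβδ hγ hγδ => ?_⟩
  have hdist : dist (β, γ) ((0, 0) : ℝ × ℝ) < δ := by
    rw [Prod.dist_eq, Real.dist_0_eq_abs, Real.dist_0_eq_abs, abs_of_nonneg hβ,
      abs_of_nonneg hγ]
    exact max_lt (by linarith) (by linarith)
  have h := hf hdist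
  rw [Function.uncurry_apply_pair, Function.uncurry_apply_pair, Real.dist_eq] at h
  linarith [(abs_lt.1 h).2]

lemma WithLp.norm_toLp_le_add {p : ENNReal} [Fact (1 ≤ p)] {F G : Type*} [SeminormedAddCommGroup F]
    [SeminormedAddCommGroup G] (a : F) (b : G) : ‖toLp p (a, b)‖ ≤ ‖a‖ + ‖b‖ := by
  calc ‖toLp p (a, b)‖ = ‖toLp p (a, (0 : G)) + toLp p ((0 : F), b)‖ := by
        rw [← toLp_add, Prod.mk_add_mk, add_zero, zero_add]
    _ ≤ ‖a‖ + ‖b‖ := (norm_add_le _ _).trans_eq (by rw [norm_toLp_fst, norm_toLp_snd])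

lemma WithLp.prod_piLp_norm_eq_of_L2 {ι F : Type*} [Fintype ι] {β : ι → Type*}
    [SeminormedAddCommGroup F] [∀ i, SeminormedAddCommGroup (β i)] (z : WithLp 2 (F × PiLp 2 β)) :
    ‖z‖ = √(‖z.fst‖ ^ 2 + ∑ i, ‖z.snd i‖ ^ 2) := by
  rw [prod_norm_eq_of_L2, PiLp.norm_sq_eq_of_L2]

lemma HasDerivAt.toLp_prodMk {p : ENNReal} [Fact (1 ≤ p)] {F G : Type*} [NormedAddCommGroup F]
    [NormedSpace ℝ F] [NormedAddCommGroup G] [NormedSpace ℝ G] {x : ℝ → F} {v : ℝ → G} {x' : F}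
    {v' : G} {t : ℝ} (hx : HasDerivAt x x' t) (hv : HasDerivAt v v' t) :
    HasDerivAt (fun s => toLp p (x s, v s)) (toLp p (x', v')) t :=
  (prodContinuousLinearEquiv p ℝ F G).symm.hasFDerivAt.comp_hasDerivAt t (hx.prodMk hv)

lemma PiLp.norm_le_sqrt_card_mul {ι : Type*} [Fintype ι] {β : ι → Type*}
    [∀ i, SeminormedAddCommGroup (β i)] {f : PiLp 2 β} {R : ℝ} (hR : 0 ≤ R) (hf : ∀ i, ‖f i‖ ≤ R) :
    ‖f‖ ≤ √(Fintype.card ι) * R := by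
  rw [PiLp.norm_eq_of_L2, ← sqrt_sq hR, ← sqrt_mul (Nat.cast_nonneg _)]
  gcongr
  calc ∑ i, ‖f i‖ ^ 2 ≤ ∑ _i : ι, R ^ 2 := by gcongr with i; exact hf i
    _ = _ := by simp

namespace SaddleDynamics

section Abstract

variable {p : ENNReal} [Fact (1 ≤ p)] {F G : Type*} [NormedAddCommGroup F] [NormedSpace ℝ F]
  [NormedAddCommGroup G] [NormedSpace ℝ G]

lemma norm_toLp_sub_toLp_le {x₁ x₂ x₀ : F} {v₁ v₂ v₀ : G} {σ M : ℝ} (hσ : 0 ≤ σ)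
    (hM : ‖toLp p (x₂, v₂) - toLp p (x₀, v₀)‖ ≤ M) :
    ‖toLp p (x₁, v₁) - toLp p (x₀, v₀)‖ ≤
      ‖toLp p (x₁ - x₀, (v₁ - v₀) - σ • (v₂ - v₀))‖ + σ * M := by
  have hsplit : toLp p (x₁, v₁) - toLp p (x₀, v₀) =
      toLp p (x₁ - x₀, (v₁ - v₀) - σ • (v₂ - v₀)) + σ • toLp p ((0 : F), v₂ - v₀) := by
    rw [← toLp_sub, ← toLp_smul, ← toLp_add]
    congr 1
    ext <;> simp
  rw [hsplit]
  refine (norm_add_le _ _).trans (add_le_add le_rfl ?_)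
  rw [norm_smul, norm_toLp_snd, Real.norm_of_nonneg hσ]
  exact mul_le_mul_of_nonneg_left ((WithLp.norm_snd_le (β := G) _ _).trans hM) hσ

variable (p) in
def IsSolution (X : WithLp p (F × G) → F) (V : ℝ → WithLp p (F × G) → G) (T β γ : ℝ)
    (x₀ : F) (v₀ : G) (x : ℝ → F) (v : ℝ → G) : Prop :=
  x 0 = x₀ ∧ v 0 = v₀ ∧ ∀ t ∈ Icc 0 T,
    HasDerivAt x (β • X (toLp p (x t, v t))) t ∧ HasDerivAt v (γ • V t (toLp p (x t, v t))) t

noncomputable def comparisonBound (C Q₀ Q₂ c M T β γ σ : ℝ) : ℝ :=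
  (β * (C + Q₀ * (σ * M)) + γ * Q₂ * ((1 + σ) * M + c)) * T * exp ((β * Q₀ + γ * Q₂) * T)
    + σ * M

lemma comparisonBound_mono {C Q₀ Q₂ c M T β β' γ γ' σ σ' : ℝ} (hC : 0 ≤ C) (hQ₀ : 0 ≤ Q₀)
    (hQ₂ : 0 ≤ Q₂) (hc : 0 ≤ c) (hM : 0 ≤ M) (hT : 0 ≤ T) (hβ : 0 ≤ β) (hββ' : β ≤ β')
    (hγ : 0 ≤ γ) (hγγ' : γ ≤ γ') (hσ : 0 ≤ σ) (hσσ' : σ ≤ σ') :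
    comparisonBound C Q₀ Q₂ c M T β γ σ ≤ comparisonBound C Q₀ Q₂ c M T β' γ' σ' := by
  have hβ' : 0 ≤ β' := hβ.trans hββ'
  have hγ' : 0 ≤ γ' := hγ.trans hγγ'
  have hσ' : 0 ≤ σ' := hσ.trans hσσ'
  unfold comparisonBound
  gcongr

variable {X : WithLp p (F × G) → F} {V : ℝ → WithLp p (F × G) → G} {T Q₀ Q₂ c : ℝ}
  {x₀ : F} {v₀ : G}

lemma IsSolution.exists_norm_sub_le {β γ : ℝ} {x : ℝ → F} {v : ℝ → G}
    (h : IsSolution p X V T β γ x₀ v₀ x v) :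
    ∃ M, ∀ t ∈ Icc 0 T, ‖toLp p (x t, v t) - toLp p (x₀, v₀)‖ ≤ M :=
  isCompact_Icc.exists_bound_of_continuousOn fun t ht =>
    ((((h.2.2 t ht).1.toLp_prodMk (h.2.2 t ht).2).continuousAt).sub
      continuousAt_const).continuousWithinAt

theorem IsSolution.norm_sub_le_comparisonBound (hQ₀ : 0 ≤ Q₀) (hQ₂ : 0 ≤ Q₂) (hc : 0 ≤ c)
    (hX : ∀ z z', ‖X z - X z'‖ ≤ Q₀ * ‖z - z'‖)
    (hV : ∀ t ∈ Icc 0 T, ∀ z z', ‖V t z - V t z'‖ ≤ Q₂ * (‖z - z'‖ + c))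
    {β₁ γ₁ β₂ γ₂ σ M : ℝ} {x₁ x₂ : ℝ → F} {v₁ v₂ : ℝ → G}
    (h₁ : IsSolution p X V T β₁ γ₁ x₀ v₀ x₁ v₁) (h₂ : IsSolution p X V T β₂ γ₂ x₀ v₀ x₂ v₂)
    (hβ₁ : 0 ≤ β₁) (hγ₁ : 0 ≤ γ₁) (hσ : 0 ≤ σ) (hσγ : σ * γ₂ = γ₁)
    (hM : ∀ t ∈ Icc 0 T, ‖toLp p (x₂ t, v₂ t) - toLp p (x₀, v₀)‖ ≤ M) :
    ∀ t ∈ Icc 0 T, ‖toLp p (x₁ t, v₁ t) - toLp p (x₀, v₀)‖ ≤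
      comparisonBound ‖X (toLp p (x₀, v₀))‖ Q₀ Q₂ c M T β₁ γ₁ σ := by
  obtain ⟨hx₁, hv₁, hd₁⟩ := h₁
  obtain ⟨hx₂, hv₂, hd₂⟩ := h₂
  set z₀ := toLp p (x₀, v₀)
  set e : ℝ → WithLp p (F × G) := fun s => toLp p (x₁ s - x₀, (v₁ s - v₀) - σ • (v₂ s - v₀))
  have he_deriv : ∀ s ∈ Icc 0 T, HasDerivAt e (toLp p (β₁ • X (toLp p (x₁ s, v₁ s)),
      γ₁ • (V s (toLp p (x₁ s, v₁ s)) - V s (toLp p (x₂ s, v₂ s))))) s := by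
    intro s hs
    refine ((hd₁ s hs).1.sub_const x₀).toLp_prodMk ?_
    have h := ((hd₁ s hs).2.sub_const v₀).sub (((hd₂ s hs).2.sub_const v₀).const_smul σ)
    rwa [smul_smul, hσγ, ← smul_sub] at h
  have he0 : e 0 = 0 := by simp [e, hx₁, hv₁, hv₂]
  have hz₁ : ∀ s ∈ Icc 0 T, ‖toLp p (x₁ s, v₁ s) - z₀‖ ≤ ‖e s‖ + σ * M :=
    fun s hs => norm_toLp_sub_toLp_le hσ (hM s hs)
  have hz₁₂ : ∀ s ∈ Icc 0 T, ‖toLp p (x₁ s, v₁ s) - toLp p (x₂ s, v₂ s)‖ ≤ ‖e s‖ + σ * M + M :=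
    fun s hs => (norm_sub_le_norm_sub_add_norm_sub _ z₀ _).trans <| by
      rw [norm_sub_rev z₀]; exact add_le_add (hz₁ s hs) (hM s hs)
  have he' : ∀ s ∈ Icc 0 T, ‖toLp p (β₁ • X (toLp p (x₁ s, v₁ s)),
      γ₁ • (V s (toLp p (x₁ s, v₁ s)) - V s (toLp p (x₂ s, v₂ s))))‖ ≤
      (β₁ * Q₀ + γ₁ * Q₂) * ‖e s‖ +
        (β₁ * (‖X z₀‖ + Q₀ * (σ * M)) + γ₁ * Q₂ * ((1 + σ) * M + c)) := by
    intro s hs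
    have hXs : ‖X (toLp p (x₁ s, v₁ s))‖ ≤ ‖X z₀‖ + Q₀ * (‖e s‖ + σ * M) :=
      (norm_le_norm_add_norm_sub' _ (X z₀)).trans <| add_le_add le_rfl
        ((hX _ _).trans (mul_le_mul_of_nonneg_left (hz₁ s hs) hQ₀))
    have hVs := (hV s hs _ _).trans (mul_le_mul_of_nonneg_left
      (add_le_add (hz₁₂ s hs) le_rfl) hQ₂)
    refine (norm_toLp_le_add _ _).trans ?_
    rw [norm_smul, norm_smul, Real.norm_of_nonneg hβ₁, Real.norm_of_nonneg hγ₁]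
    nlinarith [mul_le_mul_of_nonneg_left hXs hβ₁, mul_le_mul_of_nonneg_left hVs hγ₁]
  intro t ht
  have hM0 : 0 ≤ M := (norm_nonneg _).trans (hM 0 ⟨le_rfl, ht.1.trans ht.2⟩)
  calc ‖toLp p (x₁ t, v₁ t) - z₀‖ ≤ ‖e t‖ + σ * M := hz₁ t ht
    _ ≤ _ := add_le_add (norm_le_mul_exp_of_norm_deriv_le (by positivity) (by positivity)
      he_deriv he0 he' t ht) le_rfl

theorem exists_uniform_comparisonBound (hT : 0 ≤ T) (hQ₀ : 0 ≤ Q₀) (hQ₂ : 0 ≤ Q₂) (hc : 0 ≤ c)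
    (hX : ∀ z z', ‖X z - X z'‖ ≤ Q₀ * ‖z - z'‖)
    (hV : ∀ t ∈ Icc 0 T, ∀ z z', ‖V t z - V t z'‖ ≤ Q₂ * (‖z - z'‖ + c)) :
    ∃ γs > 0, ∃ M ≥ 0, ∀ β γ x v, 0 ≤ β → 0 ≤ γ → IsSolution p X V T β γ x₀ v₀ x v →
      ∀ t ∈ Icc 0 T, ‖toLp p (x t, v t) - toLp p (x₀, v₀)‖ ≤
        comparisonBound ‖X (toLp p (x₀, v₀))‖ Q₀ Q₂ c M T β γ (γ / γs) := by
  by_cases href : ∃ βs γs xs vs, 0 < γs ∧ IsSolution p X V T βs γs x₀ v₀ xs vs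
  · obtain ⟨βs, γs, xs, vs, hγs, hs⟩ := href
    obtain ⟨M, hM⟩ := hs.exists_norm_sub_le
    refine ⟨γs, hγs, M, (norm_nonneg _).trans (hM 0 ⟨le_rfl, hT⟩), fun β γ x v hβ hγ h =>
      h.norm_sub_le_comparisonBound hQ₀ hQ₂ hc hX hV hs hβ hγ (by positivity) ?_ hM⟩
    exact div_mul_cancel₀ γ hγs.ne'
  · -- no solution moves `v`, so each solution serves as its own reference
    refine ⟨1, one_pos, 0, le_rfl, fun β γ x v hβ hγ h => ?_⟩
    obtain rfl : γ = 0 := by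
      by_contra hγ0
      exact href ⟨β, γ, x, v, lt_of_le_of_ne hγ (Ne.symm hγ0), h⟩
    obtain ⟨M, hM⟩ := h.exists_norm_sub_le
    simpa [comparisonBound] using
      h.norm_sub_le_comparisonBound hQ₀ hQ₂ hc hX hV h hβ le_rfl le_rfl (zero_mul 0) hM

theorem exists_bound_of_isSolution (hT : 0 ≤ T) (hQ₀ : 0 ≤ Q₀) (hQ₂ : 0 ≤ Q₂) (hc : 0 ≤ c)
    (hX : ∀ z z', ‖X z - X z'‖ ≤ Q₀ * ‖z - z'‖)
    (hV : ∀ t ∈ Icc 0 T, ∀ z z', ‖V t z - V t z'‖ ≤ Q₂ * (‖z - z'‖ + c)) :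
    ∃ S : ℝ → ℝ → ℝ,
      (∀ β β' γ γ', 0 ≤ β → β ≤ β' → 0 ≤ γ → γ ≤ γ' → S β γ ≤ S β' γ') ∧
      S 0 0 = ‖toLp p (x₀, v₀)‖ ∧
      (∀ ε, 0 < ε → ∃ δ > 0, ∀ β γ, 0 ≤ β → β ≤ δ → 0 ≤ γ → γ ≤ δ →
        S β γ ≤ ‖toLp p (x₀, v₀)‖ + ε) ∧
      ∀ β γ x v, 0 ≤ β → 0 ≤ γ → IsSolution p X V T β γ x₀ v₀ x v →
        ∀ t ∈ Icc 0 T, ‖toLp p (x t, v t)‖ ≤ S β γ := by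
  obtain ⟨γs, hγs, M, hM, hbound⟩ :=
    exists_uniform_comparisonBound (x₀ := x₀) (v₀ := v₀) hT hQ₀ hQ₂ hc hX hV
  set S : ℝ → ℝ → ℝ := fun β γ =>
    ‖toLp p (x₀, v₀)‖ + comparisonBound ‖X (toLp p (x₀, v₀))‖ Q₀ Q₂ c M T β γ (γ / γs)
  have hS0 : S 0 0 = ‖toLp p (x₀, v₀)‖ := by simp [S, comparisonBound]
  refine ⟨S, fun β β' γ γ' hβ hββ' hγ hγγ' => ?_, hS0, fun ε hε => ?_, ?_⟩
  · exact add_le_add le_rfl (comparisonBound_mono (norm_nonneg _) hQ₀ hQ₂ hc hM hT hβ hββ' hγ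
      hγγ' (by positivity) (by gcongr))
  · have hcont : ContinuousAt (Function.uncurry S) (0, 0) := by
      unfold S comparisonBound Function.uncurry
      fun_prop
    simpa [hS0] using exists_pos_forall_le_add_of_continuousAt hcont hε
  · intro β γ x v hβ hγ h t ht
    calc ‖toLp p (x t, v t)‖
        ≤ ‖toLp p (x₀, v₀)‖ + ‖toLp p (x t, v t) - toLp p (x₀, v₀)‖ :=
          norm_le_norm_add_norm_sub' _ _
      _ ≤ S β γ := add_le_add le_rfl (hbound β γ x v hβ hγ h t ht)

end Abstract

section Dimer

variable {F : Type*} [NormedAddCommGroup F] {k : ℕ}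

/-- The state `(x, v₁, …, v_k)` lives in `WithLp 2 (F × PiLp 2 _)`, whose norm is
`√(‖x‖² + ∑ ‖vᵢ‖²)`. -/
noncomputable def dimerX (Xt : F → (Fin k → F) → F) :
    WithLp 2 (F × PiLp 2 (fun _ : Fin k => F)) → F :=
  fun z => Xt z.fst (ofLp z.snd)

/-- The length `l` is eliminated: `dl/dt = -l` forces `l t = l₀ * exp (-t)`. -/
noncomputable def dimerV (Vt : Fin k → F → (Fin k → F) → ℝ → F) (l₀ : ℝ) :
    ℝ → WithLp 2 (F × PiLp 2 (fun _ : Fin k => F)) → PiLp 2 (fun _ : Fin k => F) :=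
  fun t z => toLp 2 fun i => Vt i z.fst (ofLp z.snd) (l₀ * exp (-t))

lemma norm_dimerX_sub_le {Xt : F → (Fin k → F) → F} {Q₀ : ℝ}
    (hX : ∀ x x' v v', ‖Xt x v - Xt x' v'‖ ≤ Q₀ * √(‖x - x'‖ ^ 2 + ∑ i, ‖v i - v' i‖ ^ 2))
    (z z' : WithLp 2 (F × PiLp 2 (fun _ : Fin k => F))) :
    ‖dimerX Xt z - dimerX Xt z'‖ ≤ Q₀ * ‖z - z'‖ := by
  simpa [dimerX, prod_piLp_norm_eq_of_L2] using hX z.fst z'.fst (ofLp z.snd) (ofLp z'.snd)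

lemma norm_dimerV_sub_le {Vt : Fin k → F → (Fin k → F) → ℝ → F} {l₀ Q₂ T : ℝ} (hl₀ : 0 < l₀)
    (hQ₂ : 0 ≤ Q₂) (hV : ∀ i x x' v v' l, 0 < l → l ≤ l₀ → ‖Vt i x v l - Vt i x' v' l‖
      ≤ Q₂ * (√(‖x - x'‖ ^ 2 + ∑ j, ‖v j - v' j‖ ^ 2) + l₀ ^ 2)) :
    ∀ t ∈ Icc 0 T, ∀ z z', ‖dimerV Vt l₀ t z - dimerV Vt l₀ t z'‖ ≤
      √k * Q₂ * (‖z - z'‖ + l₀ ^ 2) := by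
  intro t ht z z'
  have hl : l₀ * exp (-t) ≤ l₀ :=
    mul_le_of_le_one_right hl₀.le (exp_le_one_iff.2 (by linarith [ht.1]))
  refine (PiLp.norm_le_sqrt_card_mul (R := Q₂ * (‖z - z'‖ + l₀ ^ 2)) (by positivity)
    fun i => ?_).trans_eq (by rw [Fintype.card_fin, mul_assoc])
  simpa [dimerV, prod_piLp_norm_eq_of_L2] using
    hV i z.fst z'.fst (ofLp z.snd) (ofLp z'.snd) _ (by positivity) hl

lemma isSolution_dimer [NormedSpace ℝ F] {Xt : F → (Fin k → F) → F}
    {Vt : Fin k → F → (Fin k → F) → ℝ → F} {l₀ T β γ : ℝ} {x₀ : F} {v₀ : Fin k → F}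
    {x : ℝ → F} {v : Fin k → ℝ → F} {l : ℝ → ℝ} (hx0 : x 0 = x₀) (hv0 : ∀ i, v i 0 = v₀ i)
    (hl0 : l 0 = l₀) (hdx : ∀ t ∈ Icc 0 T, HasDerivAt x (β • Xt (x t) (fun i => v i t)) t)
    (hdv : ∀ i, ∀ t ∈ Icc 0 T, HasDerivAt (v i) (γ • Vt i (x t) (fun j => v j t) (l t)) t)
    (hdl : ∀ t ∈ Icc 0 T, HasDerivAt l (-(l t)) t) :
    IsSolution 2 (dimerX Xt) (dimerV Vt l₀) T β γ x₀ (toLp 2 v₀) x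
      (fun t => toLp 2 fun i => v i t) := by
  refine ⟨hx0, congrArg (toLp 2) (funext hv0), fun t ht => ⟨hdx t ht, ?_⟩⟩
  have hv : HasDerivAt (fun t i => v i t) (fun i => γ • Vt i (x t) (fun j => v j t) (l t)) t :=
    hasDerivAt_pi.2 fun i => hdv i t ht
  rw [eq_mul_exp_neg_of_hasDerivAt hdl t ht, hl0] at hv
  exact (PiLp.continuousLinearEquiv 2 ℝ _).symm.hasFDerivAt.comp_hasDerivAt t hv

end Dimer

end SaddleDynamics

open SaddleDynamics

theorem stmt8_general {N k : ℕ} (T l₀ Q₀ Q₂ : ℝ) (hT : 0 < T) (hl₀ : 0 < l₀)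
    (hQ₀ : 0 ≤ Q₀) (hQ₂ : 0 ≤ Q₂)
    (Xt : EuclideanSpace ℝ (Fin N) → (Fin k → EuclideanSpace ℝ (Fin N)) → EuclideanSpace ℝ (Fin N))
    (Vt : Fin k → EuclideanSpace ℝ (Fin N) → (Fin k → EuclideanSpace ℝ (Fin N)) → ℝ →
      EuclideanSpace ℝ (Fin N))
    (hX : ∀ x x' v v', ‖Xt x v - Xt x' v'‖
      ≤ Q₀ * Real.sqrt (‖x - x'‖ ^ 2 + ∑ i, ‖v i - v' i‖ ^ 2))
    (hV : ∀ i x x' v v' l, 0 < l → l ≤ l₀ →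
      ‖Vt i x v l - Vt i x' v' l‖
        ≤ Q₂ * (Real.sqrt (‖x - x'‖ ^ 2 + ∑ j, ‖v j - v' j‖ ^ 2) + l₀ ^ 2))
    (x₀ : EuclideanSpace ℝ (Fin N)) (v₀ : Fin k → EuclideanSpace ℝ (Fin N)) :
    ∃ S : ℝ → ℝ → ℝ,
      (∀ β β' γ γ', 0 ≤ β → β ≤ β' → 0 ≤ γ → γ ≤ γ' → S β γ ≤ S β' γ') ∧
      S 0 0 = Real.sqrt (‖x₀‖ ^ 2 + ∑ i, ‖v₀ i‖ ^ 2) ∧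
      (∀ ε₀, 0 < ε₀ → ∃ δ, 0 < δ ∧ ∀ β γ, 0 ≤ β → β ≤ δ → 0 ≤ γ → γ ≤ δ →
        S β γ ≤ Real.sqrt (‖x₀‖ ^ 2 + ∑ i, ‖v₀ i‖ ^ 2) + ε₀) ∧
      (∀ (β γ : ℝ) (x : ℝ → EuclideanSpace ℝ (Fin N))
          (v : Fin k → ℝ → EuclideanSpace ℝ (Fin N)) (l : ℝ → ℝ),
        0 ≤ β → 0 ≤ γ →
        x 0 = x₀ → (∀ i, v i 0 = v₀ i) → l 0 = l₀ →
        (∀ t ∈ Set.Icc (0:ℝ) T, HasDerivAt x (β • Xt (x t) (fun i => v i t)) t) →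
        (∀ i, ∀ t ∈ Set.Icc (0:ℝ) T,
          HasDerivAt (v i) (γ • Vt i (x t) (fun j => v j t) (l t)) t) →
        (∀ t ∈ Set.Icc (0:ℝ) T, HasDerivAt l (-(l t)) t) →
        ∀ t ∈ Set.Icc (0:ℝ) T, Real.sqrt (‖x t‖ ^ 2 + ∑ i, ‖v i t‖ ^ 2) ≤ S β γ) := by
  have hnorm : ∀ (y : EuclideanSpace ℝ (Fin N)) (w : Fin k → EuclideanSpace ℝ (Fin N)),
      ‖toLp 2 (y, toLp 2 w)‖ = √(‖y‖ ^ 2 + ∑ i, ‖w i‖ ^ 2) :=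
    fun _ _ => prod_piLp_norm_eq_of_L2 _
  obtain ⟨S, hmono, hS0, hsmall, hbound⟩ := exists_bound_of_isSolution (x₀ := x₀)
    (v₀ := toLp 2 v₀) hT.le hQ₀ (by positivity) (sq_nonneg l₀) (norm_dimerX_sub_le hX)
    (norm_dimerV_sub_le hl₀ hQ₂ hV)
  refine ⟨S, hmono, hS0.trans (hnorm x₀ v₀), fun ε hε => hnorm x₀ v₀ ▸ hsmall ε hε, ?_⟩
  intro β γ x v l hβ hγ hx0 hv0 hl0 hdx hdv hdl t ht
  exact hnorm (x t) (fun i => v i t) ▸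
    hbound β γ x _ hβ hγ (isSolution_dimer hx0 hv0 hl0 hdx hdv hdl) t ht

/-- Boundedness of solutions of the modified shrinking-dimer saddle dynamics
`dx/dt = β X̃(x,v)`, `dv_i/dt = γ Ṽ_i(x,v,l)`, `dl/dt = -l` with globally Lipschitz
right-hand sides: there is a function `S(β,γ)`, increasing in both arguments, with
`S(0,0) = (‖x₀‖² + ∑‖v_{i,0}‖²)^{1/2}`, bounding `(‖x(t)‖² + ∑‖v_i(t)‖²)^{1/2}` on `[0,T]`;
in particular `S(β,γ)` is within `ε₀` of its minimum for `β, γ` small enough. -/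
theorem stmt8 {N k : ℕ} (T l₀ Q₀ Q₂ r₀ : ℝ) (hT : 0 < T) (hl₀ : 0 < l₀)
    (hQ₀ : 0 ≤ Q₀) (hQ₂ : 0 ≤ Q₂)
    (Xt : EuclideanSpace ℝ (Fin N) → (Fin k → EuclideanSpace ℝ (Fin N)) → EuclideanSpace ℝ (Fin N))
    (Vt : Fin k → EuclideanSpace ℝ (Fin N) → (Fin k → EuclideanSpace ℝ (Fin N)) → ℝ →
      EuclideanSpace ℝ (Fin N))
    (hX : ∀ x x' v v', ‖Xt x v - Xt x' v'‖
      ≤ Q₀ * Real.sqrt (‖x - x'‖ ^ 2 + ∑ i, ‖v i - v' i‖ ^ 2))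
    (hV : ∀ i x x' v v' l, 0 < l → l ≤ l₀ →
      ‖Vt i x v l - Vt i x' v' l‖
        ≤ Q₂ * (Real.sqrt (‖x - x'‖ ^ 2 + ∑ j, ‖v j - v' j‖ ^ 2) + l₀ ^ 2))
    (x₀ : EuclideanSpace ℝ (Fin N)) (v₀ : Fin k → EuclideanSpace ℝ (Fin N))
    (hinit : ‖x₀‖ ^ 2 + ∑ i, ‖v₀ i‖ ^ 2 ≤ r₀ ^ 2) :
    ∃ S : ℝ → ℝ → ℝ,
      (∀ β β' γ γ', 0 ≤ β → β ≤ β' → 0 ≤ γ → γ ≤ γ' → S β γ ≤ S β' γ') ∧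
      S 0 0 = Real.sqrt (‖x₀‖ ^ 2 + ∑ i, ‖v₀ i‖ ^ 2) ∧
      (∀ ε₀, 0 < ε₀ → ∃ δ, 0 < δ ∧ ∀ β γ, 0 ≤ β → β ≤ δ → 0 ≤ γ → γ ≤ δ →
        S β γ ≤ Real.sqrt (‖x₀‖ ^ 2 + ∑ i, ‖v₀ i‖ ^ 2) + ε₀) ∧
      (∀ (β γ : ℝ) (x : ℝ → EuclideanSpace ℝ (Fin N))
          (v : Fin k → ℝ → EuclideanSpace ℝ (Fin N)) (l : ℝ → ℝ),
        0 ≤ β → 0 ≤ γ →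
        x 0 = x₀ → (∀ i, v i 0 = v₀ i) → l 0 = l₀ →
        (∀ t ∈ Set.Icc (0:ℝ) T, HasDerivAt x (β • Xt (x t) (fun i => v i t)) t) →
        (∀ i, ∀ t ∈ Set.Icc (0:ℝ) T,
          HasDerivAt (v i) (γ • Vt i (x t) (fun j => v j t) (l t)) t) →
        (∀ t ∈ Set.Icc (0:ℝ) T, HasDerivAt l (-(l t)) t) →
        ∀ t ∈ Set.Icc (0:ℝ) T, Real.sqrt (‖x t‖ ^ 2 + ∑ i, ‖v i t‖ ^ 2) ≤ S β γ) :=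
  stmt8_general T l₀ Q₀ Q₂ hT hl₀ hQ₀ hQ₂ Xt Vt hX hV x₀ v₀
end

section
/- Let H be a symmetric N×N matrix and v₁, ..., v_k orthonormal vectors in ℝ^N. For 1 ≤ i ≤ k define ṽ_i = v_i + τ γ (I - v_i v_iᵀ - 2∑_{j<i} v_j v_jᵀ) H v_i. Then for all 1 ≤ m < i ≤ k, |ṽ_mᵀ ṽ_i| ≤ C τ², where C depends only on γ, k, and ‖H‖. -/
open scoped BigOperators RealInnerProductSpace

/-- Near-orthogonality of the one-step Euler update with exact symmetric
Hessian: for orthonormal `v₁,...,v_k` and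
`ṽ_i = v_i + τγ (I - v_i v_iᵀ - 2∑_{j<i} v_j v_jᵀ) H v_i`, one has
`|ṽ_mᵀ ṽ_i| ≤ C τ²` for `m < i`, with `C` independent of `τ`. -/
theorem stmt9 {N k : ℕ} (γ : ℝ) (hγ : 0 < γ)
    (H : EuclideanSpace ℝ (Fin N) →L[ℝ] EuclideanSpace ℝ (Fin N))
    (hsym : ∀ x y, ⟪H x, y⟫ = ⟪x, H y⟫)
    (v : Fin k → EuclideanSpace ℝ (Fin N)) (hv : Orthonormal ℝ v) :
    ∃ C : ℝ, ∀ τ : ℝ, 0 < τ → ∀ m i : Fin k, m < i →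
      |⟪v m + (τ * γ) • (H (v m) - ⟪v m, H (v m)⟫ • v m
            - (2:ℝ) • ∑ j ∈ Finset.univ.filter (· < m), ⟪v j, H (v m)⟫ • v j),
         v i + (τ * γ) • (H (v i) - ⟪v i, H (v i)⟫ • v i
            - (2:ℝ) • ∑ j ∈ Finset.univ.filter (· < i), ⟪v j, H (v i)⟫ • v j)⟫|
        ≤ C * τ ^ 2 := by
  classical
  set a : Fin k → EuclideanSpace ℝ (Fin N) := fun m =>
    H (v m) - ⟪v m, H (v m)⟫ • v m
      - (2:ℝ) • ∑ j ∈ Finset.univ.filter (· < m), ⟪v j, H (v m)⟫ • v j with ha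
  refine ⟨γ ^ 2 * (∑ j, ‖a j‖) ^ 2, ?_⟩
  intro τ hτ m i hmi
  have hvv : ∀ p q : Fin k, ⟪v p, v q⟫ = if p = q then (1:ℝ) else 0 := fun p q =>
    orthonormal_iff_ite.mp hv p q
  have h1 : ⟪v m, v i⟫ = 0 := by rw [hvv]; simp [hmi.ne]
  have h2 : ⟪a m, v i⟫ = ⟪v m, H (v i)⟫ := by
    have hs : ∑ j ∈ Finset.univ.filter (· < m), ⟪v j, H (v m)⟫ * ⟪v j, v i⟫ = 0 := by
      refine Finset.sum_eq_zero fun j hj => ?_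
      have hji : j ≠ i := ne_of_lt (lt_trans (Finset.mem_filter.mp hj).2 hmi)
      rw [hvv]; simp [hji]
    rw [← hsym]
    simp only [ha, inner_sub_left, sum_inner, real_inner_smul_left]
    rw [h1, hs]
    ring
  have h3 : ⟪v m, a i⟫ = -⟪v m, H (v i)⟫ := by
    have hs : ∑ j ∈ Finset.univ.filter (· < i), ⟪v j, H (v i)⟫ * ⟪v m, v j⟫
        = ⟪v m, H (v i)⟫ := by
      rw [Finset.sum_eq_single_of_mem m (by simp [hmi])]
      · rw [hvv]; simp
      · intro j hj hjm
        rw [hvv]; simp [Ne.symm hjm]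
    simp only [ha, inner_sub_right, inner_smul_right, inner_sum]
    rw [h1, hs]
    ring
  have key : ⟪v m + (τ * γ) • a m, v i + (τ * γ) • a i⟫
      = (τ * γ) ^ 2 * ⟪a m, a i⟫ := by
    simp only [inner_add_left, inner_add_right, real_inner_smul_left, real_inner_smul_right,
      h1, h2, h3]
    ring
  have Snn : (0:ℝ) ≤ ∑ j, ‖a j‖ := Finset.sum_nonneg fun j _ => norm_nonneg _
  have hb1 : ‖a m‖ ≤ ∑ j, ‖a j‖ :=
    Finset.single_le_sum (fun j _ => norm_nonneg (a j)) (Finset.mem_univ m)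
  have hb2 : ‖a i‖ ≤ ∑ j, ‖a j‖ :=
    Finset.single_le_sum (fun j _ => norm_nonneg (a j)) (Finset.mem_univ i)
  have habs : |⟪a m, a i⟫| ≤ ‖a m‖ * ‖a i‖ := abs_real_inner_le_norm _ _
  rw [key]
  calc |(τ * γ) ^ 2 * ⟪a m, a i⟫| = (τ ^ 2 * γ ^ 2) * |⟪a m, a i⟫| := by
        rw [abs_mul, abs_of_nonneg (sq_nonneg (τ * γ))]; ring
    _ ≤ (τ ^ 2 * γ ^ 2) * ((∑ j, ‖a j‖) * (∑ j, ‖a j‖)) :=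
        mul_le_mul_of_nonneg_left
          (habs.trans (mul_le_mul hb1 hb2 (norm_nonneg _) Snn)) (by positivity)
    _ = γ ^ 2 * (∑ j, ‖a j‖) ^ 2 * τ ^ 2 := by ring
end

section
/- Let Ĥ ∈ ℝ^N with ‖Ĥ‖ ≤ M, let v₁, ..., v_k be orthonormal, fix i, and define ṽ_i = v_i + τ γ (I - v_i v_iᵀ - 2∑_{j<i} v_j v_jᵀ) Ĥ. Then there exists Q depending only on γ, k, M such that | ‖ṽ_i‖² - 1 | ≤ Q τ². -/
open scoped BigOperators RealInnerProductSpace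

/-- Lemma 3.2: for orthonormal `v₁,...,v_k`, `‖Ĥ‖ ≤ M`, and
`ṽ_i = v_i + τγ (I - v_i v_iᵀ - 2∑_{j<i} v_j v_jᵀ) Ĥ`, one has `|‖ṽ_i‖² - 1| ≤ Q τ²`
with `Q` depending only on `γ, k, M`. -/
theorem stmt11 (γ M : ℝ) (k : ℕ) (hγ : 0 < γ) (hM : 0 ≤ M) :
    ∃ Q : ℝ, ∀ (N : ℕ) (τ : ℝ), 0 < τ →
      ∀ (v : Fin k → EuclideanSpace ℝ (Fin N)) (Hh : EuclideanSpace ℝ (Fin N)),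
        Orthonormal ℝ v → ‖Hh‖ ≤ M →
        ∀ i : Fin k,
          |‖v i + (τ * γ) • (Hh - ⟪v i, Hh⟫ • v i
              - (2:ℝ) • ∑ j ∈ Finset.univ.filter (· < i), ⟪v j, Hh⟫ • v j)‖ ^ 2 - 1|
            ≤ Q * τ ^ 2 := by
  refine ⟨γ ^ 2 * ((2 + 2 * k) * M) ^ 2, ?_⟩
  intro N τ hτ v Hh hv hH i
  set s : EuclideanSpace ℝ (Fin N) :=
    ∑ j ∈ Finset.univ.filter (· < i), ⟪v j, Hh⟫ • v j with hs
  set w : EuclideanSpace ℝ (Fin N) := Hh - ⟪v i, Hh⟫ • v i - (2:ℝ) • s with hwdef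
  have hnvi : ‖v i‖ = 1 := hv.1 i
  -- orthogonality
  have hso : ⟪v i, s⟫ = 0 := by
    rw [hs, inner_sum]
    refine Finset.sum_eq_zero fun j hj => ?_
    have hji : j ≠ i := by
      have := Finset.mem_filter.mp hj
      exact ne_of_lt this.2
    rw [real_inner_smul_right, hv.2 (Ne.symm hji), mul_zero]
  have horth : ⟪v i, w⟫ = 0 := by
    rw [hwdef, inner_sub_right, inner_sub_right, real_inner_smul_right,
      real_inner_smul_right, real_inner_self_eq_norm_sq, hnvi, hso]
    ring
  -- norm expansion
  have hexp : ‖v i + (τ * γ) • w‖ ^ 2 = 1 + (τ * γ) ^ 2 * ‖w‖ ^ 2 := by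
    rw [← real_inner_self_eq_norm_sq, inner_add_add_self]
    simp only [real_inner_smul_left, real_inner_smul_right, horth, mul_zero]
    rw [real_inner_comm (v i) w, horth, real_inner_self_eq_norm_sq,
      real_inner_self_eq_norm_sq, hnvi]
    ring
  -- bound ‖w‖
  have hsb : ‖s‖ ≤ (k : ℝ) * M := by
    calc ‖s‖ ≤ ∑ j ∈ Finset.univ.filter (· < i), ‖⟪v j, Hh⟫ • v j‖ :=
          norm_sum_le _ _
      _ ≤ ∑ _j ∈ Finset.univ.filter (· < i), M := by
          refine Finset.sum_le_sum fun j _ => ?_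
          rw [norm_smul, hv.1 j, mul_one]
          calc |⟪v j, Hh⟫| ≤ ‖v j‖ * ‖Hh‖ := abs_real_inner_le_norm _ _
            _ ≤ M := by rw [hv.1 j, one_mul]; exact hH
      _ ≤ (k : ℝ) * M := by
          rw [Finset.sum_const, nsmul_eq_mul]
          have : (Finset.univ.filter (· < i)).card ≤ k := by
            simpa using Finset.card_filter_le Finset.univ (· < i)
          exact mul_le_mul_of_nonneg_right (by exact_mod_cast this) hM
  have hab : ‖⟪v i, Hh⟫ • v i‖ ≤ M := by
    rw [norm_smul, hnvi, mul_one]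
    calc |⟪v i, Hh⟫| ≤ ‖v i‖ * ‖Hh‖ := abs_real_inner_le_norm _ _
      _ ≤ M := by rw [hnvi, one_mul]; exact hH
  have hwb : ‖w‖ ≤ (2 + 2 * k) * M := by
    calc ‖w‖ ≤ ‖Hh - ⟪v i, Hh⟫ • v i‖ + ‖(2:ℝ) • s‖ := norm_sub_le _ _
      _ ≤ (‖Hh‖ + ‖⟪v i, Hh⟫ • v i‖) + 2 * ‖s‖ := by
          rw [norm_smul]
          exact add_le_add (norm_sub_le _ _) (by norm_num)
      _ ≤ (M + M) + 2 * ((k : ℝ) * M) :=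
          add_le_add (add_le_add hH hab) (by linarith)
      _ = (2 + 2 * k) * M := by ring
  rw [hexp]
  have hwnn : (0:ℝ) ≤ ‖w‖ := norm_nonneg _
  have h2 : ‖w‖ ^ 2 ≤ ((2 + 2 * k) * M) ^ 2 := by
    exact pow_le_pow_left₀ hwnn hwb 2
  have habs : |1 + (τ * γ) ^ 2 * ‖w‖ ^ 2 - 1| = (τ * γ) ^ 2 * ‖w‖ ^ 2 := by
    rw [add_sub_cancel_left, abs_of_nonneg (by positivity)]
  rw [habs]
  nlinarith [sq_nonneg (τ * γ), sq_nonneg τ, sq_nonneg γ, mul_pos hτ hγ]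
end

section
/- Let Ĥ : ℝ^N × ℝ^N → ℝ^N be any map (dimer approximation), let v₁, ..., v_k be orthonormal in ℝ^N, write Ĥ_i = Ĥ(x, v_i), and define the non-gradient update ṽ_i = v_i + τ (I - v_i v_iᵀ) Ĥ_i - τ ∑_{j<i} v_j (v_jᵀ Ĥ_i + v_iᵀ Ĥ_j). Then for all 1 ≤ m < i ≤ k, the first-order (in τ) part of ṽ_mᵀ ṽ_i vanishes exactly: ṽ_mᵀ ṽ_i = O(τ²); precisely, if ‖Ĥ_j‖ ≤ M for all j, then |ṽ_mᵀ ṽ_i| ≤ Q τ² with Q depending only on k and M. -/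
open scoped BigOperators RealInnerProductSpace

/-- non-gradient (symmetrized) update: for orthonormal `v₁,...,v_k` and
`Ĥ_i` with `‖Ĥ_i‖ ≤ M`, the updates
`ṽ_i = v_i + τ (I - v_i v_iᵀ) Ĥ_i - τ ∑_{j<i} v_j (v_jᵀ Ĥ_i + v_iᵀ Ĥ_j)` satisfy
`|ṽ_mᵀ ṽ_i| ≤ Q τ²` for `m < i`, with `Q` depending only on `k, M` (the order-`τ` part
cancels exactly thanks to the symmetrization). -/
theorem stmt18 (M : ℝ) (k : ℕ) (hM : 0 ≤ M) :
    ∃ Q : ℝ, ∀ (N : ℕ) (τ : ℝ), 0 < τ →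
      ∀ v Hh : Fin k → EuclideanSpace ℝ (Fin N),
        Orthonormal ℝ v → (∀ i, ‖Hh i‖ ≤ M) →
        ∀ m i : Fin k, m < i →
          |⟪v m + τ • (Hh m - ⟪v m, Hh m⟫ • v m)
              - τ • ∑ j ∈ Finset.univ.filter (· < m), (⟪v j, Hh m⟫ + ⟪v m, Hh j⟫) • v j,
             v i + τ • (Hh i - ⟪v i, Hh i⟫ • v i)
              - τ • ∑ j ∈ Finset.univ.filter (· < i), (⟪v j, Hh i⟫ + ⟪v i, Hh j⟫) • v j⟫|
            ≤ Q * τ ^ 2 := by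
  refine ⟨((2 * k + 2) * M) ^ 2, ?_⟩
  intro N τ hτ v Hh hv hH m i hmi
  set w : Fin k → EuclideanSpace ℝ (Fin N) := fun l =>
    (Hh l - ⟪v l, Hh l⟫ • v l)
      - ∑ j ∈ Finset.univ.filter (· < l), (⟪v j, Hh l⟫ + ⟪v l, Hh j⟫) • v j with hw
  have hrw : ∀ l : Fin k,
      v l + τ • (Hh l - ⟪v l, Hh l⟫ • v l)
        - τ • ∑ j ∈ Finset.univ.filter (· < l), (⟪v j, Hh l⟫ + ⟪v l, Hh j⟫) • v j
      = v l + τ • w l := by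
    intro l; rw [hw]; simp [smul_sub]; abel
  rw [hrw m, hrw i]
  -- norm bound on w l
  have hvn : ∀ l : Fin k, ‖v l‖ = 1 := fun l => hv.1 l
  have hwb : ∀ l : Fin k, ‖w l‖ ≤ (2 * k + 2) * M := by
    intro l
    have h1 : ‖Hh l - ⟪v l, Hh l⟫ • v l‖ ≤ 2 * M := by
      calc ‖Hh l - ⟪v l, Hh l⟫ • v l‖ ≤ ‖Hh l‖ + ‖⟪v l, Hh l⟫ • v l‖ := norm_sub_le _ _
        _ ≤ M + M := by
            refine add_le_add (hH l) ?_
            rw [norm_smul, hvn l, mul_one]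
            calc ‖⟪v l, Hh l⟫‖ = |⟪v l, Hh l⟫| := rfl
              _ ≤ ‖v l‖ * ‖Hh l‖ := abs_real_inner_le_norm _ _
              _ ≤ M := by rw [hvn l, one_mul]; exact hH l
        _ = 2 * M := by ring
    have h2 : ‖∑ j ∈ Finset.univ.filter (· < l), (⟪v j, Hh l⟫ + ⟪v l, Hh j⟫) • v j‖
        ≤ (k : ℝ) * (2 * M) := by
      calc ‖∑ j ∈ Finset.univ.filter (· < l), (⟪v j, Hh l⟫ + ⟪v l, Hh j⟫) • v j‖
          ≤ ∑ j ∈ Finset.univ.filter (· < l), ‖(⟪v j, Hh l⟫ + ⟪v l, Hh j⟫) • v j‖ :=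
            norm_sum_le _ _
        _ ≤ ∑ j ∈ Finset.univ.filter (· < l), (2 * M) := by
            refine Finset.sum_le_sum fun j _ => ?_
            rw [norm_smul, hvn j, mul_one]
            have hb : ∀ a b : Fin k, |⟪v a, Hh b⟫| ≤ M := by
              intro a b
              calc |⟪v a, Hh b⟫| ≤ ‖v a‖ * ‖Hh b‖ := abs_real_inner_le_norm _ _
                _ ≤ M := by rw [hvn a, one_mul]; exact hH b
            calc ‖⟪v j, Hh l⟫ + ⟪v l, Hh j⟫‖ = |⟪v j, Hh l⟫ + ⟪v l, Hh j⟫| := rfl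
              _ ≤ |⟪v j, Hh l⟫| + |⟪v l, Hh j⟫| := abs_add_le _ _
              _ ≤ M + M := add_le_add (hb j l) (hb l j)
              _ = 2 * M := by ring
        _ ≤ (k : ℝ) * (2 * M) := by
            rw [Finset.sum_const, nsmul_eq_mul]
            have : ((Finset.univ.filter (· < l)).card : ℝ) ≤ (k : ℝ) := by
              exact_mod_cast le_trans (Finset.card_filter_le _ _)
                (le_of_eq (by simp))
            nlinarith [mul_nonneg (by norm_num : (0:ℝ) ≤ 2) hM]
    calc ‖w l‖ ≤ ‖Hh l - ⟪v l, Hh l⟫ • v l‖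
          + ‖∑ j ∈ Finset.univ.filter (· < l), (⟪v j, Hh l⟫ + ⟪v l, Hh j⟫) • v j‖ :=
        norm_sub_le _ _
      _ ≤ 2 * M + (k : ℝ) * (2 * M) := add_le_add h1 h2
      _ = (2 * k + 2) * M := by ring
  -- orthogonality facts
  have hne : m ≠ i := ne_of_lt hmi
  have hortho : ∀ a b : Fin k, a ≠ b → ⟪v a, v b⟫ = 0 := fun a b h => hv.2 h
  have hmm : ⟪v m, v m⟫ = (1 : ℝ) := by
    have := hv.1 m
    rw [real_inner_self_eq_norm_sq, this]; norm_num
  -- key cancellation: ⟪w m, v i⟫ + ⟪v m, w i⟫ = 0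
  have hwmvi : ⟪w m, v i⟫ = ⟪Hh m, v i⟫ := by
    rw [hw]
    simp only [inner_sub_left, sum_inner, real_inner_smul_left]
    rw [hortho m i hne]
    have hz : ∑ j ∈ Finset.univ.filter (· < m),
        (⟪v j, Hh m⟫ + ⟪v m, Hh j⟫) * ⟪v j, v i⟫ = 0 :=
      Finset.sum_eq_zero fun j hj => by
        rw [hortho j i (ne_of_lt (lt_trans (Finset.mem_filter.mp hj).2 hmi))]; ring
    rw [hz]; ring
  have hvmwi : ⟪v m, w i⟫ = -⟪v i, Hh m⟫ := by
    rw [hw]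
    simp only [inner_sub_right, inner_sum, real_inner_smul_right]
    rw [hortho m i hne]
    have hsum : ∑ j ∈ Finset.univ.filter (· < i),
        (⟪v j, Hh i⟫ + ⟪v i, Hh j⟫) * ⟪v m, v j⟫ = ⟪v m, Hh i⟫ + ⟪v i, Hh m⟫ := by
      rw [Finset.sum_eq_single m]
      · rw [hmm, mul_one]
      · intro j hj hjm
        rw [hortho m j (Ne.symm hjm), mul_zero]
      · intro h
        exact absurd hmi (by simpa using h)
    rw [hsum]
    ring
  have hkey : ⟪w m, v i⟫ + ⟪v m, w i⟫ = 0 := by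
    rw [hwmvi, hvmwi, real_inner_comm]; ring
  -- expand the inner product
  have hexp : ⟪v m + τ • w m, v i + τ • w i⟫
      = τ ^ 2 * ⟪w m, w i⟫ := by
    rw [inner_add_left, inner_add_right, inner_add_right, real_inner_smul_left,
      real_inner_smul_left, real_inner_smul_right, real_inner_smul_right,
      hortho m i hne]
    nlinarith [hkey]
  rw [hexp, abs_mul, abs_pow, abs_of_pos hτ]
  have hQ : |⟪w m, w i⟫| ≤ ((2 * k + 2) * M) ^ 2 := by
    calc |⟪w m, w i⟫| ≤ ‖w m‖ * ‖w i‖ := abs_real_inner_le_norm _ _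
      _ ≤ ((2 * k + 2) * M) * ((2 * k + 2) * M) := by
          have h0 : (0:ℝ) ≤ (2 * k + 2) * M := by positivity
          exact mul_le_mul (hwb m) (hwb i) (norm_nonneg _) h0
      _ = ((2 * k + 2) * M) ^ 2 := by ring
  calc τ ^ 2 * |⟪w m, w i⟫|
      ≤ τ ^ 2 * (((2 * k + 2) * M) ^ 2) := mul_le_mul_of_nonneg_left hQ (by positivity)
    _ = ((2 * k + 2) * M) ^ 2 * τ ^ 2 := by ring
end

section
/- Let v₁, ..., v_k ∈ ℝ^N be linearly independent with |v_iᵀ v_j| ≤ ε for i ≠ j and | ‖v_i‖² - 1 | ≤ ε for all i, for sufficiently small ε > 0. Let u₁, ..., u_k be the result of Gram–Schmidt orthonormalization of v₁, ..., v_k. Then there is a constant Q depending only on k such that ‖u_i - v_i‖ ≤ Q ε for all 1 ≤ i ≤ k. -/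
/-!
Write `g` for the unnormalised Gram–Schmidt vectors and `u` for the normalised ones. The defect
`v i - g i` is the projection of `v i` onto the span of the earlier `u j`, so its norm is at most
`∑ j < i, |⟪u j, v i⟫|`, and each term is at most `ε + 2 ‖u j - v j‖` since `⟪v j, v i⟫` is small.
Normalising `g i` moves it by `|1 - ‖g i‖|`, so `d i = ‖u i - v i‖` obeys the discrete Grönwall
inequality `d i ≤ (2k + 1) ε + 4 ∑ j < i, d j`, whence `d i ≤ (2k + 1) 5 ^ i ε`.
-/

open scoped BigOperators RealInnerProductSpace

/-- Gram–Schmidt orthonormalization of a finite family of vectors (Mathlib's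
`gramSchmidtNormed`, with the well-founded-order instance supplied explicitly). -/
noncomputable def gramSchmidtGS {N k : ℕ} (v : Fin k → EuclideanSpace ℝ (Fin N)) :
    Fin k → EuclideanSpace ℝ (Fin N) :=
  haveI : WellFoundedLT (Fin k) := inferInstance
  InnerProductSpace.gramSchmidtNormed ℝ v

open Finset InnerProductSpace

theorem abs_sub_one_le_abs_sq_sub_one {a : ℝ} (ha : 0 ≤ a) : |a - 1| ≤ |a ^ 2 - 1| := by
  rw [show a ^ 2 - 1 = (a - 1) * (a + 1) by ring, abs_mul, abs_of_pos (by linarith : 0 < a + 1)]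
  nlinarith [abs_nonneg (a - 1)]

theorem le_mul_one_add_pow_of_le_add_mul_sum_Iio {k : ℕ} {d : Fin k → ℝ} {A B : ℝ} (hB : 0 ≤ B)
    (h : ∀ i, d i ≤ A + B * ∑ j ∈ Iio i, d j) (i : Fin k) : d i ≤ A * (1 + B) ^ (i : ℕ) := by
  induction i using WellFoundedLT.induction with
  | _ i ih =>
    have hgeom : ∑ j ∈ Iio i, (1 + B) ^ (j : ℕ) = ∑ n ∈ range i, (1 + B) ^ n := by
      rw [← Nat.Iio_eq_range, ← Fin.map_valEmbedding_Iio, sum_map]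
      rfl
    calc d i ≤ A + B * ∑ j ∈ Iio i, A * (1 + B) ^ (j : ℕ) := by
          grw [h i]
          gcongr with j hj
          exact ih j (mem_Iio.mp hj)
      _ = A * (1 + B) ^ (i : ℕ) := by
          have := geom_sum_mul (1 + B) i
          rw [add_sub_cancel_left] at this
          rw [← mul_sum, hgeom, mul_left_comm, mul_comm B, this]
          ring

theorem norm_inv_norm_smul_sub_self_le {𝕜 E : Type*} [RCLike 𝕜] [NormedAddCommGroup E]
    [NormedSpace 𝕜 E] (x : E) : ‖(‖x‖ : 𝕜)⁻¹ • x - x‖ ≤ |1 - ‖x‖| := by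
  rcases eq_or_ne x 0 with rfl | hx
  · simp
  have hx' : (‖x‖⁻¹ - 1) * ‖x‖ = 1 - ‖x‖ := by field_simp [norm_ne_zero_iff.mpr hx]
  rw [show (‖x‖ : 𝕜)⁻¹ • x - x = ((‖x‖⁻¹ - 1 : ℝ) : 𝕜) • x by simp [sub_smul], norm_smul,
    RCLike.norm_ofReal, ← hx', abs_mul, abs_norm]

section GramSchmidt

variable {𝕜 E ι : Type*} [RCLike 𝕜] [NormedAddCommGroup E] [InnerProductSpace 𝕜 E]
  [LinearOrder ι] [LocallyFiniteOrderBot ι] [WellFoundedLT ι]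

theorem norm_gramSchmidtNormed_le_one (f : ι → E) (n : ι) : ‖gramSchmidtNormed 𝕜 f n‖ ≤ 1 := by
  rcases eq_or_ne (gramSchmidtNormed 𝕜 f n) 0 with h | h
  · simp [h]
  · exact (gramSchmidtNormed_unit_length' h).le

theorem sub_gramSchmidt_eq_sum (f : ι → E) (n : ι) :
    f n - gramSchmidt 𝕜 f n =
      ∑ i ∈ Iio n, ⟪gramSchmidtNormed 𝕜 f i, f n⟫_𝕜 • gramSchmidtNormed 𝕜 f i := by
  conv_lhs => rw [gramSchmidt_def'' 𝕜 f n, add_sub_cancel_left]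
  refine sum_congr rfl fun i _ => ?_
  simp only [gramSchmidtNormed, inner_smul_left, smul_smul, RCLike.conj_inv, RCLike.conj_ofReal]
  ring_nf

theorem norm_sub_gramSchmidt_le (f : ι → E) (n : ι) :
    ‖f n - gramSchmidt 𝕜 f n‖ ≤ ∑ i ∈ Iio n, ‖⟪gramSchmidtNormed 𝕜 f i, f n⟫_𝕜‖ := by
  rw [sub_gramSchmidt_eq_sum]
  refine (norm_sum_le _ _).trans (sum_le_sum fun i _ => ?_)
  rw [norm_smul]
  exact mul_le_of_le_one_right (norm_nonneg _) (norm_gramSchmidtNormed_le_one f i)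

theorem norm_gramSchmidtNormed_sub_le (f : ι → E) (n : ι) :
    ‖gramSchmidtNormed 𝕜 f n - f n‖ ≤ |1 - ‖f n‖| + 2 * ‖f n - gramSchmidt 𝕜 f n‖ := by
  set g := gramSchmidt 𝕜 f n
  have hnorm : |‖f n‖ - ‖g‖| ≤ ‖f n - g‖ := abs_norm_sub_norm_le (f n) g
  calc ‖gramSchmidtNormed 𝕜 f n - f n‖ ≤ ‖gramSchmidtNormed 𝕜 f n - g‖ + ‖f n - g‖ := by
        rw [norm_sub_rev (f n)]
        exact norm_sub_le_norm_sub_add_norm_sub _ _ _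
    _ ≤ |1 - ‖g‖| + ‖f n - g‖ := by
        gcongr
        exact norm_inv_norm_smul_sub_self_le g
    _ ≤ |1 - ‖f n‖| + 2 * ‖f n - g‖ := by linarith [abs_sub_le 1 ‖f n‖ ‖g‖]

theorem norm_inner_le_norm_inner_add_norm_sub_mul (u v w : E) :
    ‖⟪u, w⟫_𝕜‖ ≤ ‖⟪v, w⟫_𝕜‖ + ‖u - v‖ * ‖w‖ := by
  calc ‖⟪u, w⟫_𝕜‖ = ‖⟪v, w⟫_𝕜 + ⟪u - v, w⟫_𝕜‖ := by rw [← inner_add_left, add_sub_cancel]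
    _ ≤ ‖⟪v, w⟫_𝕜‖ + ‖u - v‖ * ‖w‖ := by grw [norm_add_le, norm_inner_le_norm (u - v)]

end GramSchmidt

theorem norm_gramSchmidtNormed_sub_le_of_near_orthonormal {E : Type*} [NormedAddCommGroup E]
    [InnerProductSpace ℝ E] {k : ℕ} {v : Fin k → E} {ε : ℝ} (hε : ε ≤ 1)
    (hinner : ∀ i j, i ≠ j → |⟪v i, v j⟫_ℝ| ≤ ε) (hnorm : ∀ i, |‖v i‖ ^ 2 - 1| ≤ ε) (i : Fin k) :
    ‖gramSchmidtNormed ℝ v i - v i‖ ≤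
      (2 * k + 1) * ε + 4 * ∑ j ∈ Iio i, ‖gramSchmidtNormed ℝ v j - v j‖ := by
  have hε₀ : 0 ≤ ε := (abs_nonneg _).trans (hnorm i)
  have hvi : |1 - ‖v i‖| ≤ ε := by
    rw [abs_sub_comm]
    exact (abs_sub_one_le_abs_sq_sub_one (norm_nonneg _)).trans (hnorm i)
  have hvi₂ : ‖v i‖ ≤ 2 := by linarith [(abs_le.mp hvi).1]
  have hterm : ∀ j ∈ Iio i,
      ‖⟪gramSchmidtNormed ℝ v j, v i⟫_ℝ‖ ≤ ε + 2 * ‖gramSchmidtNormed ℝ v j - v j‖ := by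
    intro j hj
    grw [norm_inner_le_norm_inner_add_norm_sub_mul _ (v j), Real.norm_eq_abs,
      hinner j i (mem_Iio.mp hj).ne, hvi₂, mul_comm]
  have hcard : (#(Iio i) : ℝ) ≤ k := mod_cast (Fin.card_Iio i).trans_le i.isLt.le
  calc ‖gramSchmidtNormed ℝ v i - v i‖ ≤ |1 - ‖v i‖| + 2 * ‖v i - gramSchmidt ℝ v i‖ :=
        norm_gramSchmidtNormed_sub_le v i
    _ ≤ ε + 2 * ∑ j ∈ Iio i, (ε + 2 * ‖gramSchmidtNormed ℝ v j - v j‖) := by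
        grw [hvi, norm_sub_gramSchmidt_le, sum_le_sum hterm]
    _ = ε + 2 * (#(Iio i) * ε) + 4 * ∑ j ∈ Iio i, ‖gramSchmidtNormed ℝ v j - v j‖ := by
        rw [sum_add_distrib, sum_const, nsmul_eq_mul, ← mul_sum]
        ring
    _ ≤ (2 * k + 1) * ε + 4 * ∑ j ∈ Iio i, ‖gramSchmidtNormed ℝ v j - v j‖ := by
        grw [hcard]
        linarith

/-- stability of Gram–Schmidt orthonormalization for nearly orthonormal
vectors: for `ε` sufficiently small, if `|v_iᵀ v_j| ≤ ε` for `i ≠ j` and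
`|‖v_i‖² - 1| ≤ ε`, and `u = GS(v)` is the Gram–Schmidt orthonormalization, then
`‖u_i - v_i‖ ≤ Q ε` with `Q` depending only on `k`. -/
theorem stmt19 (k : ℕ) :
    ∃ ε₀ : ℝ, 0 < ε₀ ∧ ∃ Q : ℝ,
      ∀ (N : ℕ) (ε : ℝ) (v : Fin k → EuclideanSpace ℝ (Fin N)),
        0 < ε → ε ≤ ε₀ → LinearIndependent ℝ v →
        (∀ i j, i ≠ j → |⟪v i, v j⟫| ≤ ε) → (∀ i, |‖v i‖ ^ 2 - 1| ≤ ε) →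
        ∀ i, ‖gramSchmidtGS v i - v i‖ ≤ Q * ε := by
  refine ⟨1, one_pos, (2 * k + 1) * 5 ^ k, fun N ε v hε hε₁ _ hinner hnorm i => ?_⟩
  have hrec := norm_gramSchmidtNormed_sub_le_of_near_orthonormal hε₁ hinner hnorm
  calc ‖gramSchmidtGS v i - v i‖ ≤ (2 * k + 1) * ε * (1 + 4) ^ (i : ℕ) :=
        le_mul_one_add_pow_of_le_add_mul_sum_Iio (by norm_num) hrec i
    _ ≤ (2 * k + 1) * 5 ^ k * ε := by
        rw [mul_right_comm]
        norm_num
        gcongr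
        exacts [by norm_num, i.isLt.le]
end
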